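/- arXiv:1610.09152 — 3 statements merged into one kernel-verified Lean document; each statement's English description precedes it below -/
import Mathlib

section
/- Let G1 and G2 be finite nonempty simple graphs. A real number μ is an eigenvalue of the Laplacian matrix L(G1 □ G2) of the box product graph if and only if there exist an eigenvalue λ1 of L(G1) and an eigenvalue λ2 of L(G2) such that μ = λ1 + λ2. -/
/-!
The Laplacian of `G1 □ G2` acts on a product vector `(a, b) ↦ v a * u b` by
`L(G1 □ G2) (v ⊗ u) = L(G1) v ⊗ u + v ⊗ L(G2) u`, so products of eigenvectors are eigenvectors
with eigenvalue `λ1 + λ2`. Conversely, products of the members of orthonormal eigenbases of the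
symmetric matrices `L(G1)` and `L(G2)` span all functions on `V1 × V2`, so an eigenvector `x` of
`L(G1 □ G2)` pairs nontrivially with one of them; since eigenvectors of a symmetric matrix that
are not orthogonal share their eigenvalue, the eigenvalue of `x` is such a sum `λ1 + λ2`.
-/

open Matrix SimpleGraph

instance SimpleGraph.boxProdAdjDecidable {α β : Type*} (G : SimpleGraph α) (H : SimpleGraph β)
    [DecidableRel G.Adj] [DecidableRel H.Adj] [DecidableEq α] [DecidableEq β] :
    DecidableRel (G □ H).Adj :=
  fun _ _ => decidable_of_iff' _ boxProd_adj

theorem prod_ne_zero_of_ne_zero {ι κ M₀ : Type*} [MulZeroClass M₀] [NoZeroDivisors M₀]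
    {v : ι → M₀} {u : κ → M₀} (hv : v ≠ 0) (hu : u ≠ 0) :
    (fun p : ι × κ => v p.1 * u p.2) ≠ 0 := by
  obtain ⟨a, ha⟩ := Function.ne_iff.mp hv
  obtain ⟨b, hb⟩ := Function.ne_iff.mp hu
  exact Function.ne_iff.mpr ⟨(a, b), mul_ne_zero ha hb⟩

section

variable {ι κ : Type*} [Fintype ι] [Fintype κ]

theorem Matrix.IsSymm.eq_of_mulVec_eq_smul {R : Type*} [CommRing R] [IsDomain R]
    {M : Matrix ι ι R} (hM : M.IsSymm) {w x : ι → R} {a μ : R}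
    (hw : M *ᵥ w = a • w) (hx : M *ᵥ x = μ • x) (hwx : w ⬝ᵥ x ≠ 0) : μ = a := by
  have hpair : w ⬝ᵥ (M *ᵥ x) = (M *ᵥ w) ⬝ᵥ x := by
    rw [dotProduct_mulVec, ← mulVec_transpose, hM.eq]
  rw [hw, hx, dotProduct_smul, smul_dotProduct, smul_eq_mul, smul_eq_mul] at hpair
  exact mul_left_cancel₀ hwx (by rw [mul_comm, hpair, mul_comm])

theorem OrthonormalBasis.coe_apply_ne_zero (B : OrthonormalBasis ι ℝ (EuclideanSpace ℝ ι))
    (i : ι) : ⇑(B i) ≠ 0 := by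
  simpa using B.orthonormal.ne_zero i

theorem OrthonormalBasis.eq_zero_of_forall_dotProduct_eq_zero
    (B : OrthonormalBasis ι ℝ (EuclideanSpace ℝ ι)) {f : ι → ℝ} (h : ∀ i, ⇑(B i) ⬝ᵥ f = 0) :
    f = 0 := by
  suffices WithLp.toLp 2 f = 0 by simpa using congrArg WithLp.ofLp this
  refine B.repr.injective ?_
  ext i
  rw [B.repr_apply_apply, map_zero, PiLp.inner_apply]
  simpa [mul_comm, dotProduct] using h i

theorem OrthonormalBasis.exists_prod_dotProduct_ne_zero
    (B : OrthonormalBasis ι ℝ (EuclideanSpace ℝ ι)) (C : OrthonormalBasis κ ℝ (EuclideanSpace ℝ κ))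
    {x : ι × κ → ℝ} (hx : x ≠ 0) :
    ∃ i j, (fun p : ι × κ => B i p.1 * C j p.2) ⬝ᵥ x ≠ 0 := by
  by_contra! h
  refine hx (funext fun ⟨a, b⟩ => ?_)
  have hrow : ∀ i, (fun b => ⇑(B i) ⬝ᵥ fun a => x (a, b)) = 0 := fun i =>
    C.eq_zero_of_forall_dotProduct_eq_zero fun j => by
      rw [← h i j]
      simp only [dotProduct, Fintype.sum_prod_type, Finset.mul_sum]
      rw [Finset.sum_comm]
      exact Finset.sum_congr rfl fun _ _ => Finset.sum_congr rfl fun _ _ => by ring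
  have hcol : (fun a => x (a, b)) = 0 :=
    B.eq_zero_of_forall_dotProduct_eq_zero fun i => congrFun (hrow i) b
  exact congrFun hcol a

theorem SimpleGraph.lapMatrix_boxProd_mulVec_prod [DecidableEq ι] [DecidableEq κ]
    (G1 : SimpleGraph ι) (G2 : SimpleGraph κ) [DecidableRel G1.Adj] [DecidableRel G2.Adj]
    (v : ι → ℝ) (u : κ → ℝ) :
    (G1 □ G2).lapMatrix ℝ *ᵥ (fun p => v p.1 * u p.2) =
      fun p => (G1.lapMatrix ℝ *ᵥ v) p.1 * u p.2 + v p.1 * (G2.lapMatrix ℝ *ᵥ u) p.2 := by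
  funext ⟨a, b⟩
  simp only [lapMatrix_mulVec_apply]
  rw [degree_boxProd, neighborFinset_boxProd, Finset.sum_disjUnion, Finset.sum_product,
    Finset.sum_product]
  simp only [Finset.sum_singleton]
  rw [← Finset.sum_mul, ← Finset.mul_sum]
  push_cast
  ring

theorem SimpleGraph.lapMatrix_boxProd_mulVec_prod_of_eigen [DecidableEq ι] [DecidableEq κ]
    (G1 : SimpleGraph ι) (G2 : SimpleGraph κ) [DecidableRel G1.Adj] [DecidableRel G2.Adj]
    {v : ι → ℝ} {u : κ → ℝ} {a b : ℝ}
    (hv : G1.lapMatrix ℝ *ᵥ v = a • v) (hu : G2.lapMatrix ℝ *ᵥ u = b • u) :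
    (G1 □ G2).lapMatrix ℝ *ᵥ (fun p => v p.1 * u p.2) = (a + b) • fun p => v p.1 * u p.2 := by
  rw [lapMatrix_boxProd_mulVec_prod, hv, hu]
  funext p
  simp only [Pi.smul_apply, smul_eq_mul]
  ring

theorem SimpleGraph.exists_eigenvalues_add_of_lapMatrix_boxProd_mulVec [DecidableEq ι]
    [DecidableEq κ] (G1 : SimpleGraph ι) (G2 : SimpleGraph κ)
    [DecidableRel G1.Adj] [DecidableRel G2.Adj] {x : ι × κ → ℝ} {μ : ℝ} (hx : x ≠ 0)
    (hμ : (G1 □ G2).lapMatrix ℝ *ᵥ x = μ • x) :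
    ∃ i j, μ = (G1.isHermitian_lapMatrix ℝ).eigenvalues i +
      (G2.isHermitian_lapMatrix ℝ).eigenvalues j := by
  set h1 := G1.isHermitian_lapMatrix ℝ
  set h2 := G2.isHermitian_lapMatrix ℝ
  obtain ⟨i, j, hij⟩ := h1.eigenvectorBasis.exists_prod_dotProduct_ne_zero h2.eigenvectorBasis hx
  exact ⟨i, j, ((G1 □ G2).isSymm_lapMatrix ℝ).eq_of_mulVec_eq_smul
    (lapMatrix_boxProd_mulVec_prod_of_eigen G1 G2 (h1.mulVec_eigenvectorBasis i)
      (h2.mulVec_eigenvectorBasis j)) hμ hij⟩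

end

theorem lapMatrix_boxProd_eigenvalue_iff_general
    {V1 V2 : Type*} [Fintype V1] [Fintype V2] [DecidableEq V1] [DecidableEq V2]
    (G1 : SimpleGraph V1) (G2 : SimpleGraph V2)
    [DecidableRel G1.Adj] [DecidableRel G2.Adj] (μ : ℝ) :
    (∃ x : V1 × V2 → ℝ, x ≠ 0 ∧ (G1 □ G2).lapMatrix ℝ *ᵥ x = μ • x) ↔
      ∃ lam1 lam2 : ℝ,
        (∃ v : V1 → ℝ, v ≠ 0 ∧ G1.lapMatrix ℝ *ᵥ v = lam1 • v) ∧
        (∃ u : V2 → ℝ, u ≠ 0 ∧ G2.lapMatrix ℝ *ᵥ u = lam2 • u) ∧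
        μ = lam1 + lam2 := by
  constructor
  · rintro ⟨x, hx, hμ⟩
    have h1 := G1.isHermitian_lapMatrix ℝ
    have h2 := G2.isHermitian_lapMatrix ℝ
    obtain ⟨i, j, rfl⟩ := exists_eigenvalues_add_of_lapMatrix_boxProd_mulVec G1 G2 hx hμ
    exact ⟨_, _, ⟨_, h1.eigenvectorBasis.coe_apply_ne_zero i, h1.mulVec_eigenvectorBasis i⟩,
      ⟨_, h2.eigenvectorBasis.coe_apply_ne_zero j, h2.mulVec_eigenvectorBasis j⟩, rfl⟩
  · rintro ⟨a, b, ⟨v, hv, hva⟩, ⟨u, hu, hub⟩, rfl⟩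
    exact ⟨_, prod_ne_zero_of_ne_zero hv hu, lapMatrix_boxProd_mulVec_prod_of_eigen G1 G2 hva hub⟩

/-- A real number `μ` is an eigenvalue of the Laplacian of the box product of two finite
nonempty simple graphs iff it is the sum of an eigenvalue of `L(G1)` and one of `L(G2)`. -/
theorem lapMatrix_boxProd_eigenvalue_iff
    {V1 V2 : Type*} [Fintype V1] [Fintype V2] [DecidableEq V1] [DecidableEq V2]
    [Nonempty V1] [Nonempty V2]
    (G1 : SimpleGraph V1) (G2 : SimpleGraph V2)
    [DecidableRel G1.Adj] [DecidableRel G2.Adj] (μ : ℝ) :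
    (∃ x : V1 × V2 → ℝ, x ≠ 0 ∧ (G1 □ G2).lapMatrix ℝ *ᵥ x = μ • x) ↔
      ∃ lam1 lam2 : ℝ,
        (∃ v : V1 → ℝ, v ≠ 0 ∧ G1.lapMatrix ℝ *ᵥ v = lam1 • v) ∧
        (∃ u : V2 → ℝ, u ≠ 0 ∧ G2.lapMatrix ℝ *ᵥ u = lam2 • u) ∧
        μ = lam1 + lam2 :=
  lapMatrix_boxProd_eigenvalue_iff_general G1 G2 μ
end

section
/- Let N ≥ 1 and let P_N be the path graph on vertices {0,1,...,N−1}. For every k with 0 ≤ k ≤ N−1, the vector v^(k) ∈ ℝ^N with components v^(k)_j = cos(πk(j + 1/2)/N), j = 0,...,N−1, satisfies L(P_N) v^(k) = 4 sin²(πk/(2N)) • v^(k); that is, v^(k) is an eigenvector of the path-graph Laplacian with eigenvalue 4 sin²(πk/(2N)). -/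
open Matrix SimpleGraph Real

/-- The path graph on vertices `{0, 1, ..., N-1}`: `i` and `j` are adjacent iff `|i - j| = 1`. -/
def pathG (N : ℕ) : SimpleGraph (Fin N) where
  Adj i j := i.val + 1 = j.val ∨ j.val + 1 = i.val
  symm := ⟨fun _ _ h => h.symm⟩
  loopless := ⟨fun i h => by rcases h with h | h <;> omega⟩

instance (N : ℕ) : DecidableRel (pathG N).Adj :=
  fun _ _ => inferInstanceAs (Decidable (_ ∨ _))

/-!
Extend `v^(k)` to all of `ℤ` by `f x = cos (θ (x + 1/2))` with `θ = πk/N`. The DCT phase `1/2`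
makes `f` symmetric about `-1/2` and, since `θ N = πk`, about `N - 1/2`; so `f (-1) = f 0` and
`f N = f (N - 1)`. These ghost values make the Laplacian of `P_N` act on `f` as the full
second difference `2 f j - f (j - 1) - f (j + 1)` also at the two endpoints, and the addition
formula turns that into `(2 - 2 cos θ) f j = 4 sin² (θ/2) f j`.
-/

open Finset

theorem two_mul_cos_sub_cos_sub_cos (x θ : ℝ) :
    2 * cos x - cos (x - θ) - cos (x + θ) = 4 * sin (θ / 2) ^ 2 * cos x := by
  have hθ : cos θ = 1 - 2 * sin (θ / 2) ^ 2 := by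
    rw [sin_sq, cos_sq]; ring_nf
  rw [cos_sub, cos_add, hθ]; ring

theorem cos_nat_mul_pi_add (n : ℕ) (x : ℝ) : cos (n * π + x) = cos (n * π - x) := by
  rw [add_comm, cos_add_nat_mul_pi, cos_nat_mul_pi_sub]

section PathGraph

variable {N : ℕ} (f : ℤ → ℝ) (j : Fin N)

theorem sum_sub_filter_pred (h0 : f (-1) = f 0) :
    ∑ u ∈ univ.filter (fun u : Fin N => u.val + 1 = j.val), (f j - f u) = f j - f (j - 1) := by
  rcases Nat.eq_zero_or_pos j.val with hj | hj
  · rw [filter_false_of_mem (by omega), sum_empty, hj]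
    simp [h0]
  · rw [show univ.filter (fun u : Fin N => u.val + 1 = j.val) = {⟨j - 1, by omega⟩} by
      ext u; simp [Fin.ext_iff]; omega, sum_singleton]
    push_cast [Nat.cast_sub hj]
    rfl

theorem sum_sub_filter_succ (hN : f N = f (N - 1)) :
    ∑ u ∈ univ.filter (fun u : Fin N => j.val + 1 = u.val), (f j - f u) = f j - f (j + 1) := by
  rcases Nat.lt_or_ge (j.val + 1) N with hj | hj
  · rw [show univ.filter (fun u : Fin N => j.val + 1 = u.val) = {⟨j + 1, hj⟩} by
      ext u; simp [Fin.ext_iff]; omega, sum_singleton]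
    push_cast
    rfl
  · have hjN : (j : ℤ) + 1 = N := by have := j.isLt; omega
    rw [filter_false_of_mem (fun u _ => by omega), sum_empty, hjN, hN, ← hjN]
    simp

theorem pathG_lapMatrix_mulVec_apply (h0 : f (-1) = f 0) (hN : f N = f (N - 1)) :
    ((pathG N).lapMatrix ℝ *ᵥ fun i => f i) j = (f j - f (j - 1)) + (f j - f (j + 1)) := by
  have hnbr : ((pathG N).lapMatrix ℝ *ᵥ fun i => f i) j =
      ∑ u ∈ univ.filter (fun u : Fin N => j.val + 1 = u.val ∨ u.val + 1 = j.val),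
        (f j - f u) := by
    rw [lapMatrix_mulVec_apply, ← card_neighborFinset_eq_degree, ← nsmul_eq_mul, ← sum_const,
      ← sum_sub_distrib, neighborFinset_eq_filter]
    rfl
  rw [hnbr, filter_or, sum_union (disjoint_filter.2 fun u _ _ => by omega),
    sum_sub_filter_pred f j h0, sum_sub_filter_succ f j hN]
  ring

end PathGraph

theorem pathGraph_lapMatrix_dct_eigen_general (N : ℕ) (k : Fin N) :
    (pathG N).lapMatrix ℝ *ᵥ
        (fun j : Fin N => Real.cos (Real.pi * k * ((j : ℝ) + 1 / 2) / N)) =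
      (4 * Real.sin (Real.pi * k / (2 * N)) ^ 2) •
        (fun j : Fin N => Real.cos (Real.pi * k * ((j : ℝ) + 1 / 2) / N)) := by
  set θ := π * k / N
  set f : ℤ → ℝ := fun x => cos (θ * (x + 1 / 2))
  have hv : (fun j : Fin N => cos (π * k * ((j : ℝ) + 1 / 2) / N)) =
      fun j : Fin N => f (j : ℕ) := by
    ext j
    simp only [f, θ, Int.cast_natCast]
    congr 1
    ring
  have h0 : f (-1) = f 0 := by
    simp only [f]
    rw [← cos_neg]
    congr 1
    push_cast
    ring
  have hN : f N = f (N - 1) := by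
    have hN0 : (N : ℝ) ≠ 0 := Nat.cast_ne_zero.mpr (Fin.pos k).ne'
    have hθN : θ * N = k * π := by simp only [θ]; field_simp
    have hplus : θ * (N + 1 / 2) = k * π + θ / 2 := by rw [← hθN]; ring
    have hminus : θ * (N - 1 + 1 / 2) = k * π - θ / 2 := by rw [← hθN]; ring
    simp only [f, Int.cast_sub, Int.cast_natCast, Int.cast_one]
    rw [hplus, hminus, cos_nat_mul_pi_add]
  have hsecond (x : ℤ) :
      (f x - f (x - 1)) + (f x - f (x + 1)) = 4 * sin (θ / 2) ^ 2 * f x := by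
    rw [← two_mul_cos_sub_cos_sub_cos]
    simp only [f]
    push_cast
    ring_nf
  ext j
  rw [hv, Pi.smul_apply, pathG_lapMatrix_mulVec_apply f j h0 hN, hsecond, smul_eq_mul,
    show π * k / (2 * N) = θ / 2 by ring]

/-- The 1D-DCT vector `v^(k)`, `v^(k)_j = cos (π k (j + 1/2) / N)`, is an eigenvector of the
Laplacian of the path graph `P_N` with eigenvalue `4 sin² (π k / (2N))`. -/
theorem pathGraph_lapMatrix_dct_eigen (N : ℕ) (hN : 1 ≤ N) (k : Fin N) :
    (pathG N).lapMatrix ℝ *ᵥ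
        (fun j : Fin N => Real.cos (Real.pi * k * ((j : ℝ) + 1 / 2) / N)) =
      (4 * Real.sin (Real.pi * k / (2 * N)) ^ 2) •
        (fun j : Fin N => Real.cos (Real.pi * k * ((j : ℝ) + 1 / 2) / N)) :=
  pathGraph_lapMatrix_dct_eigen_general N k
end

section
/- Let A be a real N×N orthogonal matrix (AᵀA = I), y ∈ ℝ^N and λ > 0. Define x* ∈ ℝ^N componentwise by x*_i = (Aᵀy)_i if (Aᵀy)_i² > λ and x*_i = 0 otherwise. Then for every x ∈ ℝ^N, ‖A x* − y‖² + λ‖x*‖₀ ≤ ‖A x − y‖² + λ‖x‖₀; i.e., the hard-thresholded vector x* = H_{√λ}[Aᵀ y] is a global minimizer of the functional x ↦ ‖A x − y‖² + λ‖x‖₀. -/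
/-!
Since `A` is orthogonal, `‖A x - y‖ = ‖x - Aᵀ y‖`, so the objective separates into the scalar
problems `t ↦ (t - z)² + λ [t ≠ 0]` with `z = (Aᵀ y)ᵢ`. Each is minimised either by `t = 0`, at cost
`z²`, or by `t = z`, at cost `λ`; hard thresholding picks the cheaper of the two.
-/

open Matrix Finset

section Orthogonal

variable {n R : Type*} [Fintype n] [DecidableEq n]

theorem dotProduct_mulVec_self_of_transpose_mul_self_eq_one {m : Type*} [Fintype m]
    [CommSemiring R] {A : Matrix m n R} (hA : Aᵀ * A = 1) (v : n → R) :
    (A *ᵥ v) ⬝ᵥ (A *ᵥ v) = v ⬝ᵥ v := by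
  rw [dotProduct_mulVec, ← mulVec_transpose, mulVec_mulVec, hA, one_mulVec]

theorem sum_sq_mulVec_sub_eq_of_transpose_mul_self_eq_one [CommRing R] {A : Matrix n n R}
    (hA : Aᵀ * A = 1) (u y : n → R) :
    ∑ i, ((A *ᵥ u) i - y i) ^ 2 = ∑ i, (u i - (Aᵀ *ᵥ y) i) ^ 2 := by
  have hy : A *ᵥ (Aᵀ *ᵥ y) = y := by
    rw [mulVec_mulVec, mul_eq_one_comm.mp hA, one_mulVec]
  have hres : A *ᵥ u - y = A *ᵥ (u - Aᵀ *ᵥ y) := by rw [mulVec_sub, hy]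
  calc ∑ i, ((A *ᵥ u) i - y i) ^ 2 = (A *ᵥ u - y) ⬝ᵥ (A *ᵥ u - y) := by simp [dotProduct, sq]
    _ = (u - Aᵀ *ᵥ y) ⬝ᵥ (u - Aᵀ *ᵥ y) := by
      rw [hres, dotProduct_mulVec_self_of_transpose_mul_self_eq_one hA]
    _ = ∑ i, (u i - (Aᵀ *ᵥ y) i) ^ 2 := by simp [dotProduct, sq]

end Orthogonal

theorem sum_sq_sub_add_mul_card_eq_sum {n : Type*} [Fintype n] (lam : ℝ) (u z : n → ℝ) :
    ∑ i, (u i - z i) ^ 2 + lam * (#{i | u i ≠ 0} : ℝ) =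
      ∑ i, ((u i - z i) ^ 2 + lam * if u i ≠ 0 then 1 else 0) := by
  rw [card_filter, Nat.cast_sum, mul_sum, ← sum_add_distrib]
  simp only [Nat.cast_ite, Nat.cast_one, Nat.cast_zero]

noncomputable def hardThreshold (lam z : ℝ) : ℝ := if z ^ 2 > lam then z else 0

theorem sq_hardThreshold_sub_add_le {lam : ℝ} (hlam : 0 ≤ lam) (z t : ℝ) :
    (hardThreshold lam z - z) ^ 2 + lam * (if hardThreshold lam z ≠ 0 then 1 else 0) ≤
      (t - z) ^ 2 + lam * if t ≠ 0 then 1 else 0 := by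
  unfold hardThreshold
  by_cases hz : z ^ 2 > lam
  · have hz0 : z ≠ 0 := by rintro rfl; norm_num at hz; linarith
    by_cases ht : t = 0
    · simp [hz, hz0, ht, le_of_lt hz]
    · simp [hz, hz0, ht, sq_nonneg (t - z)]
  · by_cases ht : t = 0
    · simp [hz, ht]
    · simp only [hz, ht, if_false, ne_eq, not_false_eq_true, not_true_eq_false, if_true]
      nlinarith [sq_nonneg (t - z)]

/-- For an orthogonal matrix `A`, the hard-thresholded vector `x* = H_√λ[Aᵀ y]` is a global
minimizer of the functional `x ↦ ‖A x - y‖² + λ‖x‖₀`. -/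
theorem hard_thresholding_orthogonal_min {N : ℕ} (A : Matrix (Fin N) (Fin N) ℝ)
    (hA : Aᵀ * A = 1) (y : Fin N → ℝ) (lam : ℝ) (hlam : 0 < lam) (x : Fin N → ℝ) :
    (∑ i, ((A *ᵥ fun j => if ((Aᵀ *ᵥ y) j) ^ 2 > lam then (Aᵀ *ᵥ y) j else 0) i - y i) ^ 2) +
        lam * ((univ.filter
          (fun j => (if ((Aᵀ *ᵥ y) j) ^ 2 > lam then (Aᵀ *ᵥ y) j else 0) ≠ 0)).card : ℝ) ≤
      (∑ i, ((A *ᵥ x) i - y i) ^ 2) +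
        lam * ((univ.filter (fun j => x j ≠ 0)).card : ℝ) := by
  have separate : ∀ u : Fin N → ℝ,
      ∑ i, ((A *ᵥ u) i - y i) ^ 2 + lam * (#{i | u i ≠ 0} : ℝ) =
        ∑ i, ((u i - (Aᵀ *ᵥ y) i) ^ 2 + lam * if u i ≠ 0 then 1 else 0) := fun u => by
    rw [sum_sq_mulVec_sub_eq_of_transpose_mul_self_eq_one hA, sum_sq_sub_add_mul_card_eq_sum]
  rw [separate, separate]
  exact sum_le_sum fun i _ => sq_hardThreshold_sub_add_le hlam.le _ _
end
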